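/- Let k ∈ {1, 5} and let d₂ be an even integer. Then for every odd prime p, 360 divides 6·p²(p⁴ − 1)·d₂ + k²·p²(p² − 1)(p² − 4), and 12 divides p²(p² − 1). Setting d_p := (6·p²(p⁴ − 1)·d₂ + k²·p²(p² − 1)(p² − 4))/360 for odd primes p, the family on ℤ[x]/(x⁴) given by ψ_2(x) = 4x + kx² + d₂x³ and ψ_p(x) = p²x + (k·p²(p² − 1)/12)·x² + d_p·x³ for odd primes p is a filtered λ-ring structure on ℤ[x]/(x⁴). -/

import Mathlib

open Polynomial

noncomputable section

/-- The truncated polynomial ring `ℤ[x]/(xⁿ)`. -/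
abbrev TP (n : ℕ) : Type := Polynomial ℤ ⧸ Ideal.span {(X : Polynomial ℤ) ^ n}

/-- The class of `x` in `ℤ[x]/(xⁿ)`. -/
def xx (n : ℕ) : TP n := Ideal.Quotient.mk _ (X : Polynomial ℤ)

/-- A filtered λ-ring structure on `ℤ[x]/(xⁿ)`, presented (via Wilkerson's theorem) as a
family of Adams operations `ψ p`, indexed by the primes `p`: each `ψ p` is a ring
endomorphism preserving the filtration ideal `(x)`, they pairwise commute, and
`ψ p r ≡ r ^ p (mod p)`. -/
structure AdamsFamily (n : ℕ) : Type where
  ψ : Nat.Primes → (TP n →+* TP n)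
  maps_ideal : ∀ (p : Nat.Primes), ∀ a ∈ Ideal.span {xx n}, ψ p a ∈ Ideal.span {xx n}
  comm : ∀ p q : Nat.Primes, (ψ p).comp (ψ q) = (ψ q).comp (ψ p)
  frob : ∀ (p : Nat.Primes) (a : TP n),
    ψ p a - a ^ (p : ℕ) ∈ Ideal.span {((p : ℕ) : TP n)}

/-- Isomorphism of filtered λ-ring structures on `ℤ[x]/(xⁿ)`: a filtration-preserving ring
automorphism intertwining the Adams operations. -/
def AdamsIso {n : ℕ} (R S : AdamsFamily n) : Prop :=
  ∃ σ : TP n ≃+* TP n,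
    (Ideal.span {xx n}).map σ.toRingHom = Ideal.span {xx n} ∧
    ∀ p : Nat.Primes, σ.toRingHom.comp (R.ψ p) = (S.ψ p).comp σ.toRingHom

/-- The prime 2 as an element of `Nat.Primes`. -/
def P2 : Nat.Primes := ⟨2, Nat.prime_two⟩

/-- The prime 3 as an element of `Nat.Primes`. -/
def P3 : Nat.Primes := ⟨3, Nat.prime_three⟩

/-!
Every `ψ_n` is the substitution `x ↦ n²x + Bₙx² + Cₙx³`, where `12 Bₙ = k n²(n² - 1)` and
`360 Cₙ = 6 d₂ n²(n⁴ - 1) + k² n²(n² - 1)(n² - 4)`; both right-hand sides are divisible by `12`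
and `360` for every integer `n`. The substitutions commute because over `ℚ` they are
simultaneously linearised: `y = x - (k/12)x² + (k²/90 - d₂/60)x³` satisfies
`y(ψ_n(x)) = n² y(x)` modulo `x⁴`.

The set of `r` with `ψ_p(r) ≡ r^p (mod p)` is closed under sums and products (Fermat for
integers, `p ∣ (a + b)^p - a^p - b^p`), so it suffices to check it at `x`, coefficientwise:
for `p = 2` and `p = 3` this needs `k` odd, `d₂` even and `k² ≡ 1 (mod 3)`; for `p ≥ 5`,
where `x^p = 0`, it says that `p` divides `Bₚ` and `Cₚ`, which holds as `p² ∤ 12` and `p² ∤ 360`.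
-/

namespace TP

theorem xx_pow_self (n : ℕ) : xx n ^ n = 0 := by
  rw [xx, ← map_pow]
  exact Ideal.Quotient.eq_zero_iff_mem.mpr (Ideal.mem_span_singleton_self _)

theorem ringHom_ext {n : ℕ} {S : Type*} [Semiring S] {f g : TP n →+* S}
    (h : f (xx n) = g (xx n)) : f = g :=
  Ideal.Quotient.ringHom_ext (Polynomial.ringHom_ext' (RingHom.ext_int _ _) h)

theorem adjoin_xx (n : ℕ) : Algebra.adjoin ℤ {xx n} = ⊤ :=
  AdjoinRoot.adjoinRoot_eq_top

def lift {n : ℕ} {S : Type*} [CommRing S] (s : S) (hs : s ^ n = 0) : TP n →+* S :=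
  AdjoinRoot.lift (Int.castRingHom S) s (by simp [hs])

theorem lift_xx {n : ℕ} {S : Type*} [CommRing S] (s : S) (hs : s ^ n = 0) :
    lift s hs (xx n) = s :=
  AdjoinRoot.lift_root _

end TP

theorem RingHom.sub_pow_mem_span_of_adjoin_eq_top {R : Type*} [CommRing R] {p : ℕ}
    (hp : p.Prime) (φ : R →+* R) {x : R} (hx : Algebra.adjoin ℤ {x} = ⊤)
    (h : φ x - x ^ p ∈ Ideal.span {(p : R)}) (a : R) :
    φ a - a ^ p ∈ Ideal.span {(p : R)} := by
  have ha : a ∈ Algebra.adjoin ℤ {x} := hx ▸ Algebra.mem_top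
  induction ha using Algebra.adjoin_induction with
  | mem y hy => rwa [Set.mem_singleton_iff.mp hy]
  | algebraMap m =>
    rw [algebraMap_int_eq, eq_intCast, map_intCast, Ideal.mem_span_singleton]
    exact_mod_cast Int.cast_dvd_cast _ _ (dvd_sub_comm.mp (Int.prime_dvd_pow_self_sub hp m))
  | add y z _ _ hy hz =>
    obtain ⟨r, hr⟩ := exists_add_pow_prime_eq hp y z
    rw [show φ (y + z) - (y + z) ^ p = (φ y - y ^ p) + (φ z - z ^ p) - p * (y * z * r) by
      rw [map_add, hr]; ring]
    exact sub_mem (add_mem hy hz) (Ideal.mul_mem_right _ _ (Ideal.mem_span_singleton_self _))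
  | mul y z _ _ hy hz =>
    rw [show φ (y * z) - (y * z) ^ p = φ y * (φ z - z ^ p) + z ^ p * (φ y - y ^ p) by
      rw [map_mul]; ring]
    exact add_mem (Ideal.mul_mem_left _ _ hz) (Ideal.mul_mem_left _ _ hy)

section Cubic

variable (A B C : ℤ)

def cubic : TP 4 := A * xx 4 + B * xx 4 ^ 2 + C * xx 4 ^ 3

theorem cubic_eq_xx_mul : cubic A B C = xx 4 * (A + B * xx 4 + C * xx 4 ^ 2) := by
  rw [cubic]; ring

theorem cubic_mem_span_xx : cubic A B C ∈ Ideal.span {xx 4} :=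
  Ideal.mem_span_singleton.mpr ⟨_, cubic_eq_xx_mul A B C⟩

theorem cubic_pow_four : cubic A B C ^ 4 = 0 := by
  rw [cubic_eq_xx_mul, mul_pow, TP.xx_pow_self, zero_mul]

theorem cubic_sq : cubic A B C ^ 2 = cubic 0 (A ^ 2) (2 * A * B) := by
  simp only [cubic]
  push_cast
  linear_combination (2 * A * C + B ^ 2 + 2 * B * C * xx 4 + C ^ 2 * xx 4 ^ 2 : TP 4) *
    TP.xx_pow_self 4

theorem cubic_pow_three : cubic A B C ^ 3 = cubic 0 0 (A ^ 3) := by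
  rw [pow_succ, cubic_sq]
  simp only [cubic]
  push_cast
  linear_combination
    (3 * A ^ 2 * B + (A ^ 2 * C + 2 * A * B ^ 2) * xx 4 + 2 * A * B * C * xx 4 ^ 2 : TP 4) *
      TP.xx_pow_self 4

theorem cubic_sub_cubic_mem_span {m A' B' C' : ℤ} (hA : m ∣ A - A') (hB : m ∣ B - B')
    (hC : m ∣ C - C') : cubic A B C - cubic A' B' C' ∈ Ideal.span {(m : TP 4)} := by
  obtain ⟨a, ha⟩ := hA
  obtain ⟨b, hb⟩ := hB
  obtain ⟨c, hc⟩ := hC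
  have hsub : cubic A B C - cubic A' B' C' = cubic (A - A') (B - B') (C - C') := by
    simp only [cubic]
    push_cast
    ring
  rw [hsub, ha, hb, hc, show cubic (m * a) (m * b) (m * c) = m * cubic a b c by
    simp only [cubic]; push_cast; ring]
  exact Ideal.mul_mem_right _ _ (Ideal.mem_span_singleton_self _)

def substCubic : TP 4 →+* TP 4 := TP.lift (cubic A B C) (cubic_pow_four A B C)

theorem substCubic_xx : substCubic A B C (xx 4) = cubic A B C := TP.lift_xx _ _

theorem substCubic_cubic (a b c : ℤ) :
    substCubic A B C (cubic a b c) =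
      cubic (a * A) (a * B + b * A ^ 2) (a * C + 2 * b * A * B + c * A ^ 3) := by
  conv_lhs => rw [cubic]
  simp only [map_add, map_mul, map_intCast, map_pow, substCubic_xx, cubic_sq, cubic_pow_three]
  simp only [cubic]
  push_cast
  ring

theorem substCubic_mem_span_xx {a : TP 4} (ha : a ∈ Ideal.span {xx 4}) :
    substCubic A B C a ∈ Ideal.span {xx 4} := by
  obtain ⟨t, rfl⟩ := Ideal.mem_span_singleton'.mp ha
  rw [map_mul, substCubic_xx]
  exact Ideal.mul_mem_left _ _ (cubic_mem_span_xx A B C)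

end Cubic

theorem twelve_dvd_sq_mul_sq_sub_one (n : ℤ) : 12 ∣ n ^ 2 * (n ^ 2 - 1) := by
  refine (ZMod.intCast_zmod_eq_zero_iff_dvd _ 12).mp ?_
  push_cast
  generalize (n : ZMod 12) = y
  revert y
  decide

theorem sixty_dvd_sq_mul_pow_four_sub_one (n : ℤ) : 60 ∣ n ^ 2 * (n ^ 4 - 1) := by
  refine (ZMod.intCast_zmod_eq_zero_iff_dvd _ 60).mp ?_
  push_cast
  generalize (n : ZMod 60) = y
  revert y
  decide

set_option maxRecDepth 10000 in
theorem three_sixty_dvd_sq_mul_sq_sub_one_mul_sq_sub_four (n : ℤ) :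
    360 ∣ n ^ 2 * (n ^ 2 - 1) * (n ^ 2 - 4) := by
  refine (ZMod.intCast_zmod_eq_zero_iff_dvd _ 360).mp ?_
  push_cast
  generalize (n : ZMod 360) = y
  revert y
  decide

theorem Prime.dvd_of_sq_dvd_mul_of_not_sq_dvd {p a b : ℤ} (hp : Prime p) (h : p ^ 2 ∣ a * b)
    (ha : ¬ p ^ 2 ∣ a) : p ∣ b := by
  by_contra hb
  exact ha (((hp.coprime_iff_not_dvd.mpr hb).pow_left).dvd_of_dvd_mul_right h)

theorem not_sq_dvd_three_sixty {p : ℕ} (hp : p.Prime) (h5 : 5 ≤ p) : ¬ (p : ℤ) ^ 2 ∣ 360 := by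
  intro h
  have hdvd : p ^ 2 ∣ 360 := by exact_mod_cast h
  have hlt : p < 19 := by nlinarith [Nat.le_of_dvd (by norm_num) hdvd]
  interval_cases p <;> revert hp hdvd <;> decide

section AdamsOperations

variable (k d : ℤ)

def coeffTwo (n : ℤ) : ℤ := k * (n ^ 2 * (n ^ 2 - 1) / 12)

def coeffThree (n : ℤ) : ℤ :=
  (6 * n ^ 2 * (n ^ 4 - 1) * d + k ^ 2 * n ^ 2 * (n ^ 2 - 1) * (n ^ 2 - 4)) / 360

theorem three_sixty_dvd_coeffThree_numerator (n : ℤ) :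
    360 ∣ 6 * n ^ 2 * (n ^ 4 - 1) * d + k ^ 2 * n ^ 2 * (n ^ 2 - 1) * (n ^ 2 - 4) := by
  obtain ⟨a, ha⟩ := sixty_dvd_sq_mul_pow_four_sub_one n
  obtain ⟨b, hb⟩ := three_sixty_dvd_sq_mul_sq_sub_one_mul_sq_sub_four n
  exact ⟨a * d + k ^ 2 * b, by linear_combination 6 * d * ha + k ^ 2 * hb⟩

theorem twelve_mul_coeffTwo (n : ℤ) : 12 * coeffTwo k n = k * (n ^ 2 * (n ^ 2 - 1)) := by
  rw [coeffTwo, mul_left_comm, Int.mul_ediv_cancel' (twelve_dvd_sq_mul_sq_sub_one n)]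

theorem three_sixty_mul_coeffThree (n : ℤ) :
    360 * coeffThree k d n =
      6 * n ^ 2 * (n ^ 4 - 1) * d + k ^ 2 * n ^ 2 * (n ^ 2 - 1) * (n ^ 2 - 4) :=
  Int.mul_ediv_cancel' (three_sixty_dvd_coeffThree_numerator k d n)

theorem coeffTwo_two : coeffTwo k 2 = k := by norm_num [coeffTwo]

theorem coeffThree_two : coeffThree k d 2 = d :=
  mul_left_cancel₀ (show (360 : ℤ) ≠ 0 by norm_num) (by rw [three_sixty_mul_coeffThree]; ring)

theorem coeffTwo_three : coeffTwo k 3 = 6 * k := by norm_num [coeffTwo]; ring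

theorem coeffThree_three : coeffThree k d 3 = 12 * d + k ^ 2 :=
  mul_left_cancel₀ (show (360 : ℤ) ≠ 0 by norm_num) (by rw [three_sixty_mul_coeffThree]; ring)

def adamsOp (n : ℤ) : TP 4 →+* TP 4 := substCubic (n ^ 2) (coeffTwo k n) (coeffThree k d n)

theorem adamsOp_comm (m n : ℤ) :
    (adamsOp k d m).comp (adamsOp k d n) = (adamsOp k d n).comp (adamsOp k d m) := by
  refine TP.ringHom_ext ?_
  simp only [RingHom.comp_apply, adamsOp, substCubic_xx, substCubic_cubic]
  have hm := twelve_mul_coeffTwo k m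
  have hn := twelve_mul_coeffTwo k n
  congr 1
  · ring
  · apply mul_left_cancel₀ (show (12 : ℤ) ≠ 0 by norm_num)
    linear_combination (n ^ 2 - n ^ 4) * hm + (m ^ 4 - m ^ 2) * hn
  · apply mul_left_cancel₀ (show (720 : ℤ) ≠ 0 by norm_num)
    linear_combination 2 * (n ^ 2 - n ^ 6) * three_sixty_mul_coeffThree k d m
      + 2 * (m ^ 6 - m ^ 2) * three_sixty_mul_coeffThree k d n
      + 120 * (m ^ 2 - n ^ 2) * coeffTwo k n * hm
      + 10 * (m ^ 2 - n ^ 2) * k * (m ^ 4 - m ^ 2) * hn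

variable {k d} in
theorem adamsOp_xx_sub_pow_mem (hk2 : Odd k) (hk3 : k ^ 2 ≡ 1 [ZMOD 3]) (hd : Even d)
    {p : ℕ} (hp : p.Prime) :
    adamsOp k d p (xx 4) - xx 4 ^ p ∈ Ideal.span {(p : TP 4)} := by
  rw [adamsOp, substCubic_xx, ← Int.cast_natCast]
  obtain rfl | rfl | h5 : p = 2 ∨ p = 3 ∨ 5 ≤ p := by
    have := hp.two_le
    have : p ≠ 4 := by rintro rfl; norm_num at hp
    omega
  · rw [show xx 4 ^ 2 = cubic 0 1 0 by simp [cubic]]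
    simp only [Nat.cast_ofNat, coeffTwo_two, coeffThree_two]
    exact cubic_sub_cubic_mem_span _ _ _ (by norm_num) (hk2.sub_odd odd_one).two_dvd
      (by simpa using hd.two_dvd)
  · rw [show xx 4 ^ 3 = cubic 0 0 1 by simp [cubic]]
    simp only [Nat.cast_ofNat, coeffTwo_three, coeffThree_three]
    obtain ⟨t, ht⟩ := hk3.symm.dvd
    exact cubic_sub_cubic_mem_span _ _ _ (by norm_num) ⟨2 * k, by ring⟩
      ⟨4 * d + t, by linear_combination ht⟩
  · have hprime : Prime (p : ℤ) := Nat.prime_iff_prime_int.mp hp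
    have hsq360 := not_sq_dvd_three_sixty hp h5
    rw [pow_eq_zero_of_le (by omega) (TP.xx_pow_self 4),
      show (0 : TP 4) = cubic 0 0 0 by simp [cubic]]
    refine cubic_sub_cubic_mem_span _ _ _ ?_ ?_ ?_ <;> rw [sub_zero]
    · exact dvd_pow_self _ two_ne_zero
    · refine hprime.dvd_of_sq_dvd_mul_of_not_sq_dvd (a := 12) ?_
        fun h => hsq360 (h.trans (by norm_num))
      rw [twelve_mul_coeffTwo]
      exact ⟨k * (p ^ 2 - 1), by ring⟩
    · refine hprime.dvd_of_sq_dvd_mul_of_not_sq_dvd ?_ hsq360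
      rw [three_sixty_mul_coeffThree]
      exact ⟨6 * (p ^ 4 - 1) * d + k ^ 2 * (p ^ 2 - 1) * (p ^ 2 - 4), by ring⟩

end AdamsOperations

def adamsFamily (k d : ℤ) (hk2 : Odd k) (hk3 : k ^ 2 ≡ 1 [ZMOD 3]) (hd : Even d) :
    AdamsFamily 4 where
  ψ p := adamsOp k d (p : ℕ)
  maps_ideal _ _ ha := substCubic_mem_span_xx _ _ _ ha
  comm _ _ := adamsOp_comm k d _ _
  frob p := (adamsOp k d (p : ℕ)).sub_pow_mem_span_of_adjoin_eq_top p.2 (TP.adjoin_xx 4)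
    (adamsOp_xx_sub_pow_mem hk2 hk3 hd p.2)

theorem stmt14 (k d2 : ℤ) (hk : k = 1 ∨ k = 5) (hd2 : Even d2) :
    (∀ p : Nat.Primes, 2 < (p : ℕ) →
      (360 : ℤ) ∣ 6 * ((p : ℕ) : ℤ) ^ 2 * (((p : ℕ) : ℤ) ^ 4 - 1) * d2 +
          k ^ 2 * ((p : ℕ) : ℤ) ^ 2 * (((p : ℕ) : ℤ) ^ 2 - 1) * (((p : ℕ) : ℤ) ^ 2 - 4) ∧
      (12 : ℤ) ∣ ((p : ℕ) : ℤ) ^ 2 * (((p : ℕ) : ℤ) ^ 2 - 1)) ∧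
    ∃ S : AdamsFamily 4,
      S.ψ P2 (xx 4) = (4 : TP 4) * xx 4 + (k : TP 4) * xx 4 ^ 2 + (d2 : TP 4) * xx 4 ^ 3 ∧
      ∀ p : Nat.Primes, 2 < (p : ℕ) →
        S.ψ p (xx 4) = ((p : ℕ) : TP 4) ^ 2 * xx 4 +
          ((k * (((p : ℕ) : ℤ) ^ 2 * (((p : ℕ) : ℤ) ^ 2 - 1) / 12) : ℤ) : TP 4) * xx 4 ^ 2 +
          (((6 * ((p : ℕ) : ℤ) ^ 2 * (((p : ℕ) : ℤ) ^ 4 - 1) * d2 +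
              k ^ 2 * ((p : ℕ) : ℤ) ^ 2 * (((p : ℕ) : ℤ) ^ 2 - 1) *
                (((p : ℕ) : ℤ) ^ 2 - 4)) / 360 : ℤ) : TP 4) * xx 4 ^ 3 := by
  have hk2 : Odd k := by rcases hk with rfl | rfl <;> decide
  have hk3 : k ^ 2 ≡ 1 [ZMOD 3] := by rcases hk with rfl | rfl <;> decide
  refine ⟨fun p _ => ⟨three_sixty_dvd_coeffThree_numerator k d2 _,
    twelve_dvd_sq_mul_sq_sub_one _⟩, adamsFamily k d2 hk2 hk3 hd2, ?_, fun p _ => ?_⟩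
  · simp only [adamsFamily, adamsOp, substCubic_xx, P2, Nat.cast_ofNat, coeffTwo_two,
      coeffThree_two, cubic]
    norm_num
  · simp only [adamsFamily, adamsOp, substCubic_xx, cubic, coeffTwo, coeffThree]
    push_cast
    ring
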